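/- Let n ≥ 3 and consider the polynomial ring ℂ[x₁,…,xₙ,u₀,u₁,…,u_{n−1}] and the ideal generated by: x₁u₁−x₂u₀, x₁u₂−x₂u₁, x₁²−xₙu₀, x₁x₂−xₙu₁, x₂²−xₙu₂, and, for all 3 ≤ i, j ≤ n−1, the elements x₁²uᵢ−xᵢu₀, x₁x₂uᵢ−xᵢu₁, x₂²uᵢ−xᵢu₂, xᵢ−xₙuᵢ and xᵢuⱼ−xⱼuᵢ. Then the quotient ring is isomorphic as a ℂ-algebra to the polynomial ring in the n−3 variables u₃,…,u_{n−1} over the ring A = ℂ[x₁,x₂,xₙ,u₀,u₁,u₂]/(x₁u₁−x₂u₀, x₁u₂−x₂u₁, x₁²−xₙu₀, x₁x₂−xₙu₁, x₂²−xₙu₂). -/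

import Mathlib

/-
The equations `xᵢ = xₙuᵢ` (`3 ≤ i ≤ n - 1`) eliminate `x₃, …, xₙ₋₁`. After this substitution
every other generator is a multiple of one of the five equations of `A`
(e.g. `x₁²uᵢ - xᵢu₀ ↦ uᵢ (x₁² - xₙu₀)`), or vanishes identically (`xᵢuⱼ - xⱼuᵢ`), so the
quotient is `A[u₃, …, uₙ₋₁]`. Nothing depends on the base field: the isomorphism holds over
any commutative ring.
-/

open MvPolynomial

namespace FiberChart

noncomputable section

section SatisfiesA

variable {S : Type*} [CommSemiring S]

def SatisfiesA (v : Fin 6 → S) : Prop :=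
  v 0 * v 4 = v 1 * v 3 ∧ v 0 * v 5 = v 1 * v 4 ∧ v 0 ^ 2 = v 2 * v 3 ∧
    v 0 * v 1 = v 2 * v 4 ∧ v 1 ^ 2 = v 2 * v 5

theorem SatisfiesA.map {v : Fin 6 → S} (hv : SatisfiesA v) {T : Type*} [CommSemiring T]
    (f : S →+* T) : SatisfiesA (f ∘ v) := by
  obtain ⟨h1, h2, h3, h4, h5⟩ := hv
  simp only [SatisfiesA, Function.comp_apply, ← map_mul, ← map_pow, h1, h2, h3, h4, h5,
    and_self]

end SatisfiesA

section RingA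

variable (R : Type*) [CommRing R]

def idealA : Ideal (MvPolynomial (Fin 6) R) :=
  Ideal.span {X 0 * X 4 - X 1 * X 3, X 0 * X 5 - X 1 * X 4, X 0 ^ 2 - X 2 * X 3,
    X 0 * X 1 - X 2 * X 4, X 1 ^ 2 - X 2 * X 5}

abbrev RingA : Type _ := MvPolynomial (Fin 6) R ⧸ idealA R

def genA (i : Fin 6) : RingA R := Ideal.Quotient.mk (idealA R) (X i)

theorem satisfiesA_genA : SatisfiesA (genA R) := by
  refine ⟨?_, ?_, ?_, ?_, ?_⟩ <;>
    simp only [genA, ← map_mul, ← map_pow] <;>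
    exact Ideal.Quotient.eq.mpr (Ideal.subset_span (by simp))

variable {R} {S : Type*} [CommRing S] [Algebra R S]

def liftA (v : Fin 6 → S) (hv : SatisfiesA v) : RingA R →ₐ[R] S :=
  Ideal.Quotient.liftₐ _ (aeval v) fun p hp => by
    obtain ⟨h1, h2, h3, h4, h5⟩ := hv
    refine (Ideal.span_le (I := RingHom.ker (aeval v)).mpr ?_ hp : _)
    simp only [Set.insert_subset_iff, Set.singleton_subset_iff, SetLike.mem_coe,
      RingHom.mem_ker, map_sub, map_mul, map_pow, aeval_X, sub_eq_zero]
    exact ⟨h1, h2, h3, h4, h5⟩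

@[simp]
theorem liftA_genA (v : Fin 6 → S) (hv : SatisfiesA v) (i : Fin 6) :
    liftA v hv (genA R i) = v i :=
  aeval_X v i

end RingA

section Fiber

variable (R : Type*) [CommRing R] (n : ℕ)

def fiberGens (hn : n ≥ 3) : Set (MvPolynomial (Fin n ⊕ Fin n) R) :=
  ({X (Sum.inl ⟨0, by omega⟩) * X (Sum.inr ⟨1, by omega⟩) -
       X (Sum.inl ⟨1, by omega⟩) * X (Sum.inr ⟨0, by omega⟩),
     X (Sum.inl ⟨0, by omega⟩) * X (Sum.inr ⟨2, by omega⟩) -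
       X (Sum.inl ⟨1, by omega⟩) * X (Sum.inr ⟨1, by omega⟩),
     X (Sum.inl ⟨0, by omega⟩) ^ 2 -
       X (Sum.inl ⟨n - 1, by omega⟩) * X (Sum.inr ⟨0, by omega⟩),
     X (Sum.inl ⟨0, by omega⟩) * X (Sum.inl ⟨1, by omega⟩) -
       X (Sum.inl ⟨n - 1, by omega⟩) * X (Sum.inr ⟨1, by omega⟩),
     X (Sum.inl ⟨1, by omega⟩) ^ 2 -
       X (Sum.inl ⟨n - 1, by omega⟩) * X (Sum.inr ⟨2, by omega⟩)} ∪
    {p | ∃ i : Fin n, 3 ≤ (i : ℕ) ∧ (i : ℕ) ≤ n - 1 ∧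
       p = X (Sum.inl ⟨0, by omega⟩) ^ 2 * X (Sum.inr i) -
         X (Sum.inl ⟨(i : ℕ) - 1, (Nat.sub_le _ _).trans_lt i.isLt⟩) * X (Sum.inr ⟨0, by omega⟩)} ∪
    {p | ∃ i : Fin n, 3 ≤ (i : ℕ) ∧ (i : ℕ) ≤ n - 1 ∧
       p = X (Sum.inl ⟨0, by omega⟩) * X (Sum.inl ⟨1, by omega⟩) * X (Sum.inr i) -
         X (Sum.inl ⟨(i : ℕ) - 1, (Nat.sub_le _ _).trans_lt i.isLt⟩) * X (Sum.inr ⟨1, by omega⟩)} ∪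
    {p | ∃ i : Fin n, 3 ≤ (i : ℕ) ∧ (i : ℕ) ≤ n - 1 ∧
       p = X (Sum.inl ⟨1, by omega⟩) ^ 2 * X (Sum.inr i) -
         X (Sum.inl ⟨(i : ℕ) - 1, (Nat.sub_le _ _).trans_lt i.isLt⟩) * X (Sum.inr ⟨2, by omega⟩)} ∪
    {p | ∃ i : Fin n, 3 ≤ (i : ℕ) ∧ (i : ℕ) ≤ n - 1 ∧
       p = X (Sum.inl ⟨(i : ℕ) - 1, (Nat.sub_le _ _).trans_lt i.isLt⟩) -
         X (Sum.inl ⟨n - 1, by omega⟩) * X (Sum.inr i)} ∪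
    {p | ∃ i j : Fin n, 3 ≤ (i : ℕ) ∧ (i : ℕ) ≤ n - 1 ∧ 3 ≤ (j : ℕ) ∧ (j : ℕ) ≤ n - 1 ∧
       p = X (Sum.inl ⟨(i : ℕ) - 1, (Nat.sub_le _ _).trans_lt i.isLt⟩) * X (Sum.inr j) -
         X (Sum.inl ⟨(j : ℕ) - 1, (Nat.sub_le _ _).trans_lt j.isLt⟩) * X (Sum.inr i)})

abbrev FiberRing (hn : n ≥ 3) : Type _ :=
  MvPolynomial (Fin n ⊕ Fin n) R ⧸ Ideal.span (fiberGens R n hn)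

/-- Writing `t = X` for the `n - 3` free variables over `A` and `xᵢ = X (inl (i - 1))`, this
sends `uᵢ ↦ tᵢ₋₃` and `xᵢ ↦ xₙ tᵢ₋₃` for `3 ≤ i ≤ n - 1`. -/
def coordImage : Fin n ⊕ Fin n → MvPolynomial (Fin (n - 3)) (RingA R)
  | Sum.inl k =>
    if _ : (k : ℕ) = 0 then C (genA R 0)
    else if _ : (k : ℕ) = 1 then C (genA R 1)
    else if _ : (k : ℕ) = n - 1 then C (genA R 2)
    else C (genA R 2) * X ⟨(k : ℕ) - 2, by omega⟩
  | Sum.inr k =>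
    if _ : (k : ℕ) < 3 then C (genA R ⟨(k : ℕ) + 3, by omega⟩)
    else X ⟨(k : ℕ) - 3, by omega⟩

variable {n}

@[simp]
theorem coordImage_inl_zero (h : 0 < n) : coordImage R n (Sum.inl ⟨0, h⟩) = C (genA R 0) := by
  simp [coordImage]

@[simp]
theorem coordImage_inl_one (h : 1 < n) : coordImage R n (Sum.inl ⟨1, h⟩) = C (genA R 1) := by
  simp [coordImage]

@[simp]
theorem coordImage_inl_last (hn : n ≥ 3) (h : n - 1 < n) :
    coordImage R n (Sum.inl ⟨n - 1, h⟩) = C (genA R 2) := by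
  simp [coordImage, show n - 1 ≠ 0 by omega, show n ≠ 2 by omega]

theorem coordImage_inl_pred (i : Fin n) (hi : 3 ≤ (i : ℕ)) (h : (i : ℕ) - 1 < n) :
    coordImage R n (Sum.inl ⟨(i : ℕ) - 1, h⟩) = C (genA R 2) * X ⟨(i : ℕ) - 3, by omega⟩ := by
  simp only [coordImage]
  rw [dif_neg (by omega), dif_neg (by omega), dif_neg (by omega)]
  congr 3

@[simp]
theorem coordImage_inr_zero (h : 0 < n) : coordImage R n (Sum.inr ⟨0, h⟩) = C (genA R 3) := by
  simp [coordImage]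

@[simp]
theorem coordImage_inr_one (h : 1 < n) : coordImage R n (Sum.inr ⟨1, h⟩) = C (genA R 4) := by
  simp [coordImage]

@[simp]
theorem coordImage_inr_two (h : 2 < n) : coordImage R n (Sum.inr ⟨2, h⟩) = C (genA R 5) := by
  simp [coordImage]

theorem coordImage_inr_of_three_le (i : Fin n) (hi : 3 ≤ (i : ℕ)) :
    coordImage R n (Sum.inr i) = X ⟨(i : ℕ) - 3, by omega⟩ := by
  simp [coordImage, show ¬ (i : ℕ) < 3 by omega]

variable {R} in
theorem aeval_coordImage_of_mem (hn : n ≥ 3) {p : MvPolynomial (Fin n ⊕ Fin n) R}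
    (hp : p ∈ fiberGens R n hn) : aeval (coordImage R n) p = 0 := by
  obtain ⟨h1, h2, h3, h4, h5⟩ :=
    (satisfiesA_genA R).map (C : RingA R →+* MvPolynomial (Fin (n - 3)) (RingA R))
  simp only [Function.comp_apply] at h1 h2 h3 h4 h5
  rcases hp with (((((hp | ⟨i, hi, -, rfl⟩) | ⟨i, hi, -, rfl⟩) | ⟨i, hi, -, rfl⟩) |
    ⟨i, hi, -, rfl⟩) | ⟨i, j, hi, -, hj, -, rfl⟩)
  · simp only [Set.mem_insert_iff, Set.mem_singleton_iff] at hp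
    rcases hp with rfl | rfl | rfl | rfl | rfl <;> simp [coordImage_inl_last R hn]
    · linear_combination h1
    · linear_combination h2
    · linear_combination h3
    · linear_combination h4
    · linear_combination h5
  all_goals simp [coordImage_inl_last R hn, coordImage_inl_pred R _ hi,
    coordImage_inr_of_three_le R _ hi]
  · linear_combination X ⟨(i : ℕ) - 3, by omega⟩ * h3
  · linear_combination X ⟨(i : ℕ) - 3, by omega⟩ * h4
  · linear_combination X ⟨(i : ℕ) - 3, by omega⟩ * h5
  · simp [coordImage_inl_pred R _ hj, coordImage_inr_of_three_le R _ hj]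
    ring

variable (hn : n ≥ 3)

def toPolyA : FiberRing R n hn →ₐ[R] MvPolynomial (Fin (n - 3)) (RingA R) :=
  Ideal.Quotient.liftₐ _ (aeval (coordImage R n)) fun _ hp =>
    (Ideal.span_le (I := RingHom.ker (aeval (coordImage R n)))).mpr
      (fun _ hq => aeval_coordImage_of_mem hn hq) hp

@[simp]
theorem toPolyA_mk_X (s : Fin n ⊕ Fin n) :
    toPolyA R hn (Ideal.Quotient.mk _ (X s)) = coordImage R n s :=
  aeval_X _ s

def baseCoords : Fin 6 → FiberRing R n hn :=
  ![Ideal.Quotient.mk _ (X (Sum.inl ⟨0, by omega⟩)),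
    Ideal.Quotient.mk _ (X (Sum.inl ⟨1, by omega⟩)),
    Ideal.Quotient.mk _ (X (Sum.inl ⟨n - 1, by omega⟩)),
    Ideal.Quotient.mk _ (X (Sum.inr ⟨0, by omega⟩)),
    Ideal.Quotient.mk _ (X (Sum.inr ⟨1, by omega⟩)),
    Ideal.Quotient.mk _ (X (Sum.inr ⟨2, by omega⟩))]

theorem satisfiesA_baseCoords : SatisfiesA (baseCoords R hn) := by
  refine ⟨?_, ?_, ?_, ?_, ?_⟩ <;>
    simp only [baseCoords, Matrix.cons_val, ← map_mul, ← map_pow] <;>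
    exact Ideal.Quotient.eq.mpr
      (Ideal.subset_span (Or.inl (Or.inl (Or.inl (Or.inl (Or.inl (by simp)))))))

def ofPolyA : MvPolynomial (Fin (n - 3)) (RingA R) →ₐ[R] FiberRing R n hn :=
  aevalTower (liftA _ (satisfiesA_baseCoords R hn))
    fun j => Ideal.Quotient.mk _ (X (Sum.inr ⟨(j : ℕ) + 3, by omega⟩))

@[simp]
theorem ofPolyA_C_genA (i : Fin 6) : ofPolyA R hn (C (genA R i)) = baseCoords R hn i := by
  simp [ofPolyA]

theorem ofPolyA_X (j : Fin (n - 3)) :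
    ofPolyA R hn (X j) = Ideal.Quotient.mk _ (X (Sum.inr ⟨(j : ℕ) + 3, by omega⟩)) := by
  simp [ofPolyA]

theorem mk_X_inl_eq (k : Fin n) (hk : 2 ≤ (k : ℕ)) (hkn : (k : ℕ) ≤ n - 2) :
    (Ideal.Quotient.mk (Ideal.span (fiberGens R n hn)) (X (Sum.inl k))) =
      Ideal.Quotient.mk _
        (X (Sum.inl ⟨n - 1, by omega⟩) * X (Sum.inr ⟨(k : ℕ) + 1, by omega⟩)) := by
  refine Ideal.Quotient.eq.mpr (Ideal.subset_span (Or.inl (Or.inr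
    ⟨⟨(k : ℕ) + 1, by omega⟩, by simp; omega, by simp; omega, ?_⟩)))
  simp

theorem ofPolyA_coordImage (s : Fin n ⊕ Fin n) :
    ofPolyA R hn (coordImage R n s) = Ideal.Quotient.mk _ (X s) := by
  rcases s with ⟨k, hk⟩ | ⟨k, hk⟩
  · by_cases h0 : k = 0
    · subst h0; simp [baseCoords]
    by_cases h1 : k = 1
    · subst h1; simp [baseCoords]
    by_cases hlast : k = n - 1
    · subst hlast; simp [coordImage_inl_last R hn, baseCoords]
    have hmid : coordImage R n (Sum.inl ⟨k, hk⟩) = C (genA R 2) * X ⟨k - 2, by omega⟩ := by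
      simp [coordImage, h0, h1, hlast]
    rw [hmid, map_mul, ofPolyA_C_genA, ofPolyA_X,
      mk_X_inl_eq R hn ⟨k, hk⟩ (by simp; omega) (by simp; omega)]
    simp [baseCoords]
    congr 4
    rw [Fin.mk.injEq]
    omega
  · by_cases h3 : k < 3
    · interval_cases k <;> simp [baseCoords]
    · rw [coordImage_inr_of_three_le R ⟨k, hk⟩ (by simpa using h3), ofPolyA_X]
      congr 3
      simp only [Fin.ext_iff]
      omega

theorem ofPolyA_comp_toPolyA : (ofPolyA R hn).comp (toPolyA R hn) = AlgHom.id R _ :=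
  Ideal.Quotient.algHom_ext R <| MvPolynomial.algHom_ext fun s => by
    simpa using ofPolyA_coordImage R hn s

theorem toPolyA_comp_ofPolyA : (toPolyA R hn).comp (ofPolyA R hn) = AlgHom.id R _ := by
  refine MvPolynomial.algHom_ext' (Ideal.Quotient.algHom_ext R <| MvPolynomial.algHom_ext
    fun i => ?_) fun j => ?_
  · change toPolyA R hn (ofPolyA R hn (C (genA R i))) = C (genA R i)
    fin_cases i <;> simp [baseCoords, coordImage_inl_last R hn]
  · simp [ofPolyA_X, coordImage_inr_of_three_le]

def equivPolyA : FiberRing R n hn ≃ₐ[R] MvPolynomial (Fin (n - 3)) (RingA R) :=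
  AlgEquiv.ofAlgHom _ _ (toPolyA_comp_ofPolyA R hn) (ofPolyA_comp_toPolyA R hn)

end Fiber

end

end FiberChart

/-- Let `n ≥ 3`. In `ℂ[x₁,…,xₙ,u₀,u₁,…,u_{n−1}]` (with `xₖ = X (Sum.inl ⟨k-1⟩)` for
`1 ≤ k ≤ n` and `uₖ = X (Sum.inr ⟨k⟩)` for `0 ≤ k ≤ n−1`), the quotient by the ideal
generated by `x₁u₁−x₂u₀`, `x₁u₂−x₂u₁`, `x₁²−xₙu₀`, `x₁x₂−xₙu₁`, `x₂²−xₙu₂`, and, for all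
`3 ≤ i, j ≤ n−1`, the elements `x₁²uᵢ−xᵢu₀`, `x₁x₂uᵢ−xᵢu₁`, `x₂²uᵢ−xᵢu₂`, `xᵢ−xₙuᵢ` and
`xᵢuⱼ−xⱼuᵢ`, is isomorphic as a `ℂ`-algebra to the polynomial ring in `n−3` variables over
`A = ℂ[x₁,x₂,xₙ,u₀,u₁,u₂]/(x₁u₁−x₂u₀, x₁u₂−x₂u₁, x₁²−xₙu₀, x₁x₂−xₙu₁, x₂²−xₙu₂)`
(in `A`: `x₁ = X 0`, `x₂ = X 1`, `xₙ = X 2`, `u₀ = X 3`, `u₁ = X 4`, `u₂ = X 5`). -/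
theorem stmt11 (n : ℕ) (hn : 3 ≤ n) :
    Nonempty
      ((MvPolynomial (Fin n ⊕ Fin n) ℂ ⧸
          Ideal.span
            (({X (Sum.inl ⟨0, by omega⟩) * X (Sum.inr ⟨1, by omega⟩) -
                 X (Sum.inl ⟨1, by omega⟩) * X (Sum.inr ⟨0, by omega⟩),
               X (Sum.inl ⟨0, by omega⟩) * X (Sum.inr ⟨2, by omega⟩) -
                 X (Sum.inl ⟨1, by omega⟩) * X (Sum.inr ⟨1, by omega⟩),
               X (Sum.inl ⟨0, by omega⟩) ^ 2 -
                 X (Sum.inl ⟨n - 1, by omega⟩) * X (Sum.inr ⟨0, by omega⟩),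
               X (Sum.inl ⟨0, by omega⟩) * X (Sum.inl ⟨1, by omega⟩) -
                 X (Sum.inl ⟨n - 1, by omega⟩) * X (Sum.inr ⟨1, by omega⟩),
               X (Sum.inl ⟨1, by omega⟩) ^ 2 -
                 X (Sum.inl ⟨n - 1, by omega⟩) * X (Sum.inr ⟨2, by omega⟩)} ∪
              {p | ∃ i : Fin n, 3 ≤ (i : ℕ) ∧ (i : ℕ) ≤ n - 1 ∧
                 p = X (Sum.inl ⟨0, by omega⟩) ^ 2 * X (Sum.inr i) -
                   X (Sum.inl ⟨(i : ℕ) - 1, by have := i.isLt; omega⟩) *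
                     X (Sum.inr ⟨0, by omega⟩)} ∪
              {p | ∃ i : Fin n, 3 ≤ (i : ℕ) ∧ (i : ℕ) ≤ n - 1 ∧
                 p = X (Sum.inl ⟨0, by omega⟩) * X (Sum.inl ⟨1, by omega⟩) * X (Sum.inr i) -
                   X (Sum.inl ⟨(i : ℕ) - 1, by have := i.isLt; omega⟩) *
                     X (Sum.inr ⟨1, by omega⟩)} ∪
              {p | ∃ i : Fin n, 3 ≤ (i : ℕ) ∧ (i : ℕ) ≤ n - 1 ∧
                 p = X (Sum.inl ⟨1, by omega⟩) ^ 2 * X (Sum.inr i) -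
                   X (Sum.inl ⟨(i : ℕ) - 1, by have := i.isLt; omega⟩) *
                     X (Sum.inr ⟨2, by omega⟩)} ∪
              {p | ∃ i : Fin n, 3 ≤ (i : ℕ) ∧ (i : ℕ) ≤ n - 1 ∧
                 p = X (Sum.inl ⟨(i : ℕ) - 1, by have := i.isLt; omega⟩) -
                   X (Sum.inl ⟨n - 1, by omega⟩) * X (Sum.inr i)} ∪
              {p | ∃ i j : Fin n, 3 ≤ (i : ℕ) ∧ (i : ℕ) ≤ n - 1 ∧
                 3 ≤ (j : ℕ) ∧ (j : ℕ) ≤ n - 1 ∧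
                 p = X (Sum.inl ⟨(i : ℕ) - 1, by have := i.isLt; omega⟩) * X (Sum.inr j) -
                   X (Sum.inl ⟨(j : ℕ) - 1, by have := j.isLt; omega⟩) * X (Sum.inr i)} :
              Set (MvPolynomial (Fin n ⊕ Fin n) ℂ)))) ≃ₐ[ℂ]
        MvPolynomial (Fin (n - 3))
          (MvPolynomial (Fin 6) ℂ ⧸
            Ideal.span {(X 0 * X 4 - X 1 * X 3 : MvPolynomial (Fin 6) ℂ),
              X 0 * X 5 - X 1 * X 4, X 0 ^ 2 - X 2 * X 3,
              X 0 * X 1 - X 2 * X 4, X 1 ^ 2 - X 2 * X 5})) :=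
  ⟨FiberChart.equivPolyA ℂ hn⟩
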